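/- arXiv:2109.00042 — 9 statements merged into one kernel-verified Lean document; each statement's English description precedes it below -/
import Mathlib

section
/- Let a, b, c, d be pairwise distinct positive integers with a < b and c < d. Let B be the ray starting at (b, b!) with direction (b, b!) − (a, a!) (i.e. the sub-ray of the ray from (a, a!) through (b, b!) that starts at (b, b!)), and let D be the ray starting at (d, d!) with direction (d, d!) − (c, c!). Then B ∩ D = ∅. -/
set_option maxHeartbeats 1000000


/-- The point `(x, x!)` in the plane. -/
noncomputable def factPt (x : ℕ) : ℝ × ℝ := ((x : ℝ), (Nat.factorial x : ℝ))

/-- The ray with origin `p` and direction `v`: `{p + t • v : t ≥ 0}`. -/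
def ray (p v : ℝ × ℝ) : Set (ℝ × ℝ) := {z | ∃ t : ℝ, 0 ≤ t ∧ z = p + t • v}

lemma key_lemma (a b c d : ℕ) (ha : 0 < a) (hc : 0 < c)
    (hab : a < b) (hcd : c < d) (hbd : b < d)
    (t s : ℝ) (ht : 0 ≤ t) (hs : 0 ≤ s)
    (hx : (b:ℝ) + t * ((b:ℝ) - a) = (d:ℝ) + s * ((d:ℝ) - c)) :
    (b.factorial:ℝ) + t * ((b.factorial:ℝ) - a.factorial)
      < (d.factorial:ℝ) + s * ((d.factorial:ℝ) - c.factorial) := by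
  obtain ⟨A, B, C, D, E, hAdef, hBdef, hCdef, hDdef, hEdef⟩ :
      ∃ A B C D E : ℝ, A = (a.factorial:ℝ) ∧ B = (b.factorial:ℝ) ∧ C = (c.factorial:ℝ) ∧
        D = (d.factorial:ℝ) ∧ E = ((d-1).factorial:ℝ) :=
    ⟨_, _, _, _, _, rfl, rfl, rfl, rfl, rfl⟩
  rw [← hAdef, ← hBdef, ← hCdef, ← hDdef]
  have hA1 : (1:ℝ) ≤ A := by
    rw [hAdef]; exact_mod_cast Nat.one_le_iff_ne_zero.mpr a.factorial_ne_zero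
  have hAB : A < B := by
    rw [hAdef, hBdef]; exact_mod_cast (Nat.factorial_lt ha).mpr hab
  have hBE : B ≤ E := by
    rw [hBdef, hEdef]; exact_mod_cast Nat.factorial_le (by omega : b ≤ d - 1)
  have hCE : C ≤ E := by
    rw [hCdef, hEdef]; exact_mod_cast Nat.factorial_le (by omega : c ≤ d - 1)
  have hDE : D = (d:ℝ) * E := by
    rw [hDdef, hEdef]
    exact_mod_cast (Nat.mul_factorial_pred (by omega)).symm
  have hE0 : (0:ℝ) < E := by
    rw [hEdef]; exact_mod_cast Nat.factorial_pos _
  have hba : (1:ℝ) ≤ (b:ℝ) - a := by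
    have : (a:ℝ) + 1 ≤ b := by exact_mod_cast hab
    linarith
  have hdc1 : (1:ℝ) ≤ (d:ℝ) - c := by
    have : (c:ℝ) + 1 ≤ d := by exact_mod_cast hcd
    linarith
  have hdcd : (d:ℝ) - c ≤ (d:ℝ) - 1 := by
    have : (1:ℝ) ≤ c := by exact_mod_cast hc
    linarith
  have hdb : (1:ℝ) ≤ (d:ℝ) - b := by
    have : (b:ℝ) + 1 ≤ d := by exact_mod_cast hbd
    linarith
  have hb1 : (1:ℝ) ≤ b := by
    have : (1:ℝ) ≤ a := by exact_mod_cast ha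
    linarith
  have htau : t * ((b:ℝ) - a) = ((d:ℝ) - b) + s * ((d:ℝ) - c) := by linarith
  have h1 : t * (B - A) ≤ t * ((b:ℝ) - a) * (B - A) := by
    nlinarith [mul_nonneg (mul_nonneg ht (by linarith : (0:ℝ) ≤ (b:ℝ) - a - 1))
      (sub_nonneg.mpr hAB.le)]
  have htau_nonneg : 0 ≤ t * ((b:ℝ) - a) := mul_nonneg ht (by linarith)
  have h2 : t * ((b:ℝ) - a) * (B - A) ≤ t * ((b:ℝ) - a) * (B - 1) := by
    nlinarith [mul_nonneg htau_nonneg (by linarith : (0:ℝ) ≤ A - 1)]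
  have hsdc : 0 ≤ s * ((d:ℝ) - c) := mul_nonneg hs (by linarith)
  have h3 : s * ((d:ℝ) - c) * E ≤ s * (D - C) := by
    have hkey : ((d:ℝ) - c) * E ≤ D - C := by
      rw [hDE]
      have e1 : ((d:ℝ) - c) * E ≤ ((d:ℝ) - 1) * E :=
        mul_le_mul_of_nonneg_right hdcd hE0.le
      nlinarith
    rw [mul_assoc]
    exact mul_le_mul_of_nonneg_left hkey hs
  have h4 : s * ((d:ℝ) - c) * (B - 1) ≤ s * ((d:ℝ) - c) * E :=
    mul_le_mul_of_nonneg_left (by linarith : B - 1 ≤ E) hsdc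
  have h5 : B + ((d:ℝ) - b) * (B - 1) < D := by
    rw [hDE]
    have e1 : B + ((d:ℝ) - b) * (B - 1) = ((d:ℝ) - b + 1) * B - ((d:ℝ) - b) := by ring
    have e2 : ((d:ℝ) - b + 1) * B ≤ ((d:ℝ) - b + 1) * E :=
      mul_le_mul_of_nonneg_left hBE (by linarith)
    have e3 : ((d:ℝ) - b + 1) * E ≤ (d:ℝ) * E :=
      mul_le_mul_of_nonneg_right (by linarith) hE0.le
    linarith
  calc B + t * (B - A) ≤ B + t * ((b:ℝ) - a) * (B - 1) := by linarith
    _ = B + ((d:ℝ) - b) * (B - 1) + s * ((d:ℝ) - c) * (B - 1) := by rw [htau]; ring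
    _ < D + s * ((d:ℝ) - c) * E := by linarith
    _ ≤ D + s * (D - C) := by linarith

theorem stmt_0 (a b c d : ℕ) (ha : 0 < a) (hb : 0 < b) (hc : 0 < c) (hd : 0 < d)
    (hab : a < b) (hcd : c < d)
    (hac : a ≠ c) (had : a ≠ d) (hbc : b ≠ c) (hbd : b ≠ d) :
    ray (factPt b) (factPt b - factPt a) ∩ ray (factPt d) (factPt d - factPt c) = ∅ := by
  ext z
  simp only [Set.mem_inter_iff, ray, Set.mem_setOf_eq, Set.mem_empty_iff_false, iff_false,
    not_and]
  rintro ⟨t, ht, hz1⟩ ⟨s, hs, hz2⟩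
  rw [hz1, Prod.ext_iff] at hz2
  simp only [factPt, Prod.fst_add, Prod.snd_add, Prod.fst_sub, Prod.snd_sub, Prod.smul_fst,
    Prod.smul_snd, smul_eq_mul] at hz2
  obtain ⟨hx, hy⟩ := hz2
  rcases lt_or_gt_of_ne hbd with h | h
  · have := key_lemma a b c d ha hc hab hcd h t s ht hs (by linarith)
    linarith
  · have := key_lemma c d a b hc ha hcd hab h s t hs ht (by linarith)
    linarith
end

section
/- Let a, b, c, d be pairwise distinct positive integers with a < b and c < d. Let A be the ray starting at (a, a!) with direction (b, b!) − (a, a!), let B be the ray starting at (b, b!) with the same direction, let C be the ray starting at (c, c!) with direction (d, d!) − (c, c!), and let D be the ray starting at (d, d!) with the same direction. Then A ∩ C ≠ ∅ if and only if (A \ B) ∩ (C \ D) ≠ ∅. -/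
/-- Upper bound on a factorial difference by the last consecutive slope. -/
lemma factRay_fact_upper (p k : ℕ) :
    (p + k + 1).factorial ≤ p.factorial + (k + 1) * ((p + k) * (p + k).factorial) := by
  induction k with
  | zero =>
    simp [Nat.factorial_succ]
    ring_nf
    omega
  | succ k ih =>
    have h1 : (p + (k+1) + 1).factorial = (p + k + 1).factorial + (p+k+1) * (p+k+1).factorial := by
      have : p + (k+1) + 1 = (p + k + 1) + 1 := by ring
      rw [this, Nat.factorial_succ]
      ring
    have h2 : (p + k) * (p + k).factorial ≤ (p + k + 1) * (p + k + 1).factorial :=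
      Nat.mul_le_mul (by omega) (Nat.factorial_le (by omega))
    calc (p + (k+1) + 1).factorial
        = (p + k + 1).factorial + (p+k+1) * (p+k+1).factorial := h1
      _ ≤ (p.factorial + (k + 1) * ((p + k) * (p + k).factorial)) + (p+k+1) * (p+k+1).factorial := by
          omega
      _ ≤ p.factorial + (k + 1 + 1) * ((p + (k+1)) * (p + (k+1)).factorial) := by
          have : (k+1) * ((p + k) * (p + k).factorial) ≤ (k+1) * ((p+k+1) * (p+k+1).factorial) :=
            Nat.mul_le_mul_left _ h2
          have e : p + (k+1) = p + k + 1 := by ring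
          rw [e]; nlinarith [this]

/-- Lower bound on a factorial difference by the first consecutive slope. -/
lemma factRay_fact_lower (q k : ℕ) :
    q.factorial + (k + 1) * (q * q.factorial) ≤ (q + k + 1).factorial := by
  induction k with
  | zero =>
    simp [Nat.factorial_succ]
    ring_nf
    omega
  | succ k ih =>
    have h1 : (q + (k+1) + 1).factorial = (q + k + 1).factorial + (q+k+1) * (q+k+1).factorial := by
      have : q + (k+1) + 1 = (q + k + 1) + 1 := by ring
      rw [this, Nat.factorial_succ]
      ring
    have h2 : q * q.factorial ≤ (q + k + 1) * (q + k + 1).factorial :=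
      Nat.mul_le_mul (by omega) (Nat.factorial_le (by omega))
    rw [h1]
    nlinarith [ih, h2]

/-- Strict monotonicity of `m * m!`. -/
lemma factRay_mulfact_lt {m n : ℕ} (h : m < n) : m * m.factorial < n * n.factorial := by
  calc m * m.factorial ≤ m * n.factorial := Nat.mul_le_mul_left _ (Nat.factorial_le h.le)
    _ < n * n.factorial := (Nat.mul_lt_mul_right (Nat.factorial_pos n)).mpr h

/-- Three-point strict convexity of the factorial, cross-multiplied real form. -/
lemma factRay_R1 {p q r : ℕ} (h1 : p < q) (h2 : q < r) :
    ((q.factorial : ℝ) - p.factorial) * ((r : ℝ) - q) <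
      ((r.factorial : ℝ) - q.factorial) * ((q : ℝ) - p) := by
  obtain ⟨k1, rfl⟩ : ∃ k1, q = p + k1 + 1 := ⟨q - p - 1, by omega⟩
  obtain ⟨k2, rfl⟩ : ∃ k2, r = (p + k1 + 1) + k2 + 1 := ⟨r - (p+k1+1) - 1, by omega⟩
  set q := p + k1 + 1 with hq
  have hA : ((q.factorial : ℝ)) ≤ p.factorial + (k1 + 1) * ((p + k1) * (p + k1).factorial) := by
    exact_mod_cast factRay_fact_upper p k1
  have hB : (q.factorial : ℝ) + (k2 + 1) * (q * q.factorial) ≤ ((q + k2 + 1).factorial : ℝ) := by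
    exact_mod_cast factRay_fact_lower q k2
  have hX : ((p + k1) * (p + k1).factorial : ℝ) < (q : ℝ) * q.factorial := by
    exact_mod_cast factRay_mulfact_lt (show p + k1 < q by omega)
  have e1 : ((q + k2 + 1 : ℕ) : ℝ) - (q : ℝ) = k2 + 1 := by push_cast; ring
  have e2 : ((q : ℕ) : ℝ) - (p : ℝ) = k1 + 1 := by push_cast [hq]; ring
  rw [e1, e2]
  nlinarith [hA, hB, hX,
    mul_pos (show (0:ℝ) < k1 + 1 by positivity) (show (0:ℝ) < k2 + 1 by positivity)]

/-- Main slope comparison: a chord with strictly larger right endpoint has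
strictly larger slope, whatever the left endpoints are. -/
lemma factRay_R2 {a b c d : ℕ} (hc : 0 < c) (hab : a < b) (hcd : c < d) (hbd : b < d) :
    ((b.factorial : ℝ) - a.factorial) * ((d : ℝ) - c) <
      ((d.factorial : ℝ) - c.factorial) * ((b : ℝ) - a) := by
  obtain ⟨m, rfl⟩ : ∃ m, b = a + m + 1 := ⟨b - a - 1, by omega⟩
  set b := a + m + 1 with hb
  obtain ⟨l, rfl⟩ : ∃ l, d = b + l + 1 := ⟨d - b - 1, by omega⟩
  set d := b + l + 1 with hd
  have hA : ((b.factorial : ℝ)) ≤ a.factorial + (m + 1) * ((a + m) * (a + m).factorial) := by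
    exact_mod_cast factRay_fact_upper a m
  have hW : ((d.factorial : ℝ)) = (b + l + 1 : ℝ) * ((b + l : ℕ).factorial : ℝ) := by
    have : d.factorial = (b + l + 1) * (b + l).factorial := by
      rw [hd, Nat.factorial_succ]
    rw [this]; push_cast; ring
  have hcle : (c.factorial : ℝ) ≤ ((b + l : ℕ).factorial : ℝ) := by
    exact_mod_cast Nat.factorial_le (show c ≤ b + l by omega)
  have hXV : ((a + m) * (a + m).factorial : ℝ) ≤ ((a + m + l) * (a + m + l).factorial : ℝ) := by
    exact_mod_cast Nat.mul_le_mul (Nat.le_add_right _ _) (Nat.factorial_le (by omega))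
  have hVW : ((a + m + l) * (a + m + l).factorial : ℝ) * ((a:ℝ) + m + l + 1) <
      ((b + l : ℕ) : ℝ) * ((b + l : ℕ).factorial : ℝ) := by
    have e : (b + l : ℕ) = (a + m + l) + 1 := by omega
    rw [e]
    have : ((a+m+l+1 : ℕ)).factorial = (a+m+l+1) * (a+m+l).factorial := Nat.factorial_succ _
    rw [this]
    push_cast
    have hfp : (0:ℝ) < ((a+m+l).factorial : ℝ) := by exact_mod_cast Nat.factorial_pos _
    nlinarith [hfp, (show (0:ℝ) ≤ (a:ℝ) + m + l by positivity)]
  have edc : ((d : ℕ) : ℝ) - (c : ℝ) ≤ (a:ℝ) + m + l + 1 := by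
    rw [hd, hb]; push_cast
    have : (1:ℝ) ≤ (c:ℝ) := by exact_mod_cast hc
    linarith
  have edc0 : (0:ℝ) < ((d : ℕ) : ℝ) - (c : ℝ) := by
    have : (c:ℝ) < d := by exact_mod_cast hcd
    linarith
  have eba : ((b : ℕ) : ℝ) - (a : ℝ) = m + 1 := by rw [hb]; push_cast; ring
  rw [eba]
  have hXpos : (0:ℝ) ≤ ((a + m) * (a + m).factorial : ℝ) := by positivity
  have key : ((a + m) * (a + m).factorial : ℝ) * (((d:ℕ):ℝ) - c) <
      (d.factorial : ℝ) - c.factorial := by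
    calc ((a + m) * (a + m).factorial : ℝ) * (((d:ℕ):ℝ) - c)
        ≤ ((a + m + l) * (a + m + l).factorial : ℝ) * ((a:ℝ) + m + l + 1) := by
          apply mul_le_mul hXV edc (le_of_lt edc0) (by positivity)
      _ < ((b + l : ℕ) : ℝ) * ((b + l : ℕ).factorial : ℝ) := hVW
      _ ≤ (d.factorial : ℝ) - c.factorial := by
          rw [hW]
          have : ((b:ℕ):ℝ) + l + 1 = ((b + l : ℕ) : ℝ) + 1 := by push_cast; ring
          nlinarith [hcle, (show (0:ℝ) ≤ ((b+l:ℕ).factorial : ℝ) by positivity)]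
  nlinarith [hA, key, edc0, (show (0:ℝ) < (m:ℝ) + 1 by positivity)]

/-- Purely real geometric core: the meeting point of the two lines has first
coordinate `< B`. -/
lemma factRay_realkey (A B C D Fa Fb Fc Fd x y t u : ℝ)
    (hAB : A < B) (hCD : C < D) (hBD : B < D)
    (ht : 0 ≤ t) (hu : 0 ≤ u)
    (e1 : x = A + t * (B - A)) (e2 : y = Fa + t * (Fb - Fa))
    (e3 : x = C + u * (D - C)) (e4 : y = Fc + u * (Fd - Fc))
    (hS : (Fb - Fa) * (D - C) < (Fd - Fc) * (B - A))
    (hcase : ((C - A) * (Fb - Fa) - (Fc - Fa) * (B - A) < 0) ∨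
             ((Fb - Fc) * (D - C) - (B - C) * (Fd - Fc) < 0)) :
    x < B := by
  have lin1 : (y - Fa) * (B - A) = (x - A) * (Fb - Fa) := by
    linear_combination (B - A) * e2 - (Fb - Fa) * e1
  have lin2 : (y - Fc) * (D - C) = (x - C) * (Fd - Fc) := by
    linear_combination (D - C) * e4 - (Fd - Fc) * e3
  have hxC : C ≤ x := by nlinarith [mul_nonneg hu (le_of_lt (sub_pos.mpr hCD))]
  rcases hcase with hneg | hbneg
  · exfalso
    have idc : (x - C) * ((Fd - Fc) * (B - A) - (Fb - Fa) * (D - C)) =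
        (D - C) * ((C - A) * (Fb - Fa) - (Fc - Fa) * (B - A)) := by
      linear_combination (D - C) * lin1 - (B - A) * lin2
    have h1' : 0 ≤ (x - C) * ((Fd - Fc) * (B - A) - (Fb - Fa) * (D - C)) :=
      mul_nonneg (by linarith) (by linarith)
    have h2' : (D - C) * ((C - A) * (Fb - Fa) - (Fc - Fa) * (B - A)) < 0 :=
      mul_neg_of_pos_of_neg (by linarith) hneg
    linarith [idc]
  · have idb : (x - B) * ((Fd - Fc) * (B - A) - (Fb - Fa) * (D - C)) =
        (B - A) * ((Fb - Fc) * (D - C) - (B - C) * (Fd - Fc)) := by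
      linear_combination (D - C) * lin1 - (B - A) * lin2
    have h2' : (B - A) * ((Fb - Fc) * (D - C) - (B - C) * (Fd - Fc)) < 0 :=
      mul_neg_of_pos_of_neg (by linarith) hbneg
    by_contra hxB
    push_neg at hxB
    have := mul_nonneg (sub_nonneg.mpr hxB) (le_of_lt (sub_pos.mpr hS))
    linarith [idb]

/-- Forward implication in the case `b < d`. -/
lemma factRay_key {a b c d : ℕ} (ha : 0 < a) (hc : 0 < c)
    (hab : a < b) (hcd : c < d) (hac : a ≠ c) (hbc : b ≠ c) (hbd : b < d) :
    (ray (factPt a) (factPt b - factPt a) ∩ ray (factPt c) (factPt d - factPt c)).Nonempty →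
    ((ray (factPt a) (factPt b - factPt a) \ ray (factPt b) (factPt b - factPt a)) ∩
     (ray (factPt c) (factPt d - factPt c) \ ray (factPt d) (factPt d - factPt c))).Nonempty := by
  rintro ⟨z, ⟨t, ht, hzA⟩, ⟨u, hu, hzC⟩⟩
  have e1 : z.1 = (a:ℝ) + t * ((b:ℝ) - a) := by rw [hzA]; simp [factPt]
  have e2 : z.2 = (a.factorial:ℝ) + t * ((b.factorial:ℝ) - a.factorial) := by
    rw [hzA]; simp [factPt]
  have e3 : z.1 = (c:ℝ) + u * ((d:ℝ) - c) := by rw [hzC]; simp [factPt]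
  have e4 : z.2 = (c.factorial:ℝ) + u * ((d.factorial:ℝ) - c.factorial) := by
    rw [hzC]; simp [factPt]
  have hAB : (a:ℝ) < b := by exact_mod_cast hab
  have hCD : (c:ℝ) < d := by exact_mod_cast hcd
  have hBD : (b:ℝ) < d := by exact_mod_cast hbd
  have hS := factRay_R2 hc hab hcd hbd
  have hcase : (((c:ℝ) - a) * ((b.factorial:ℝ) - a.factorial)
        - ((c.factorial:ℝ) - a.factorial) * ((b:ℝ) - a) < 0) ∨
      (((b.factorial:ℝ) - c.factorial) * ((d:ℝ) - c)
        - ((b:ℝ) - c) * ((d.factorial:ℝ) - c.factorial) < 0) := by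
    rcases (show c < a ∨ (a < c ∧ c < b) ∨ b < c by omega) with h | ⟨h1, h2⟩ | h
    · left
      have hR := factRay_R1 h hab
      have hCA : (c:ℝ) < a := by exact_mod_cast h
      nlinarith [hR]
    · right
      have hR := factRay_R1 h2 hbd
      nlinarith [hR]
    · left
      have hR := factRay_R1 hab h
      have hBC : (b:ℝ) < c := by exact_mod_cast h
      nlinarith [hR]
  have hxB : z.1 < (b:ℝ) :=
    factRay_realkey _ _ _ _ _ _ _ _ _ _ _ _ hAB hCD hBD ht hu e1 e2 e3 e4 hS hcase
  refine ⟨z, ⟨⟨t, ht, hzA⟩, ?_⟩, ⟨u, hu, hzC⟩, ?_⟩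
  · rintro ⟨s, hs, hzB⟩
    have hz1 : z.1 = (b:ℝ) + s * ((b:ℝ) - a) := by rw [hzB]; simp [factPt]
    have hnn : 0 ≤ s * ((b:ℝ) - a) := mul_nonneg hs (le_of_lt (sub_pos.mpr hAB))
    linarith [hz1, hxB, hnn]
  · rintro ⟨s, hs, hzD⟩
    have hz1 : z.1 = (d:ℝ) + s * ((d:ℝ) - c) := by rw [hzD]; simp [factPt]
    have hnn : 0 ≤ s * ((d:ℝ) - c) := mul_nonneg hs (le_of_lt (sub_pos.mpr hCD))
    linarith [hz1, hxB, hBD, hnn]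

theorem stmt_1 (a b c d : ℕ) (ha : 0 < a) (hb : 0 < b) (hc : 0 < c) (hd : 0 < d)
    (hab : a < b) (hcd : c < d)
    (hac : a ≠ c) (had : a ≠ d) (hbc : b ≠ c) (hbd : b ≠ d) :
    (ray (factPt a) (factPt b - factPt a) ∩ ray (factPt c) (factPt d - factPt c)).Nonempty ↔
    ((ray (factPt a) (factPt b - factPt a) \ ray (factPt b) (factPt b - factPt a)) ∩
     (ray (factPt c) (factPt d - factPt c) \ ray (factPt d) (factPt d - factPt c))).Nonempty := by
  constructor
  · intro hmeet
    rcases lt_or_gt_of_ne hbd with h | h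
    · exact factRay_key ha hc hab hcd hac hbc h hmeet
    · obtain ⟨z, hzA, hzC⟩ := hmeet
      obtain ⟨w, h1, h2⟩ :=
        factRay_key hc ha hcd hab (Ne.symm hac) (Ne.symm had) h ⟨z, hzC, hzA⟩
      exact ⟨w, h2, h1⟩
  · rintro ⟨z, ⟨hzA, -⟩, hzC, -⟩
    exact ⟨z, hzA, hzC⟩
end

section
/- Let a, b, c, d be pairwise distinct positive integers with a < b and c < d. Then the closed segment from (a, a!) to (b, b!) and the closed segment from (c, c!) to (d, d!) intersect if and only if the pairs interleave, i.e. a < c < b < d or c < a < d < b. -/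
open Set AffineMap Nat

-- Division by zero makes this the horizontal line through `p` when `p.1 = q.1`.
noncomputable def chord (p q : ℝ × ℝ) (x : ℝ) : ℝ :=
  p.2 + (q.2 - p.2) / (q.1 - p.1) * (x - p.1)

theorem chord_apply_left (p q : ℝ × ℝ) : chord p q p.1 = p.2 := by
  simp [chord]

theorem chord_apply_right {p q : ℝ × ℝ} (h : p.1 ≠ q.1) : chord p q q.1 = q.2 := by
  have : q.1 - p.1 ≠ 0 := sub_ne_zero.2 h.symm
  simp only [chord]
  field_simp
  ring

theorem chord_lineMap (p q : ℝ × ℝ) (x y t : ℝ) :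
    chord p q (lineMap x y t) = lineMap (chord p q x) (chord p q y) t := by
  simp only [chord, lineMap_apply_ring]
  ring

theorem continuous_chord (p q : ℝ × ℝ) : Continuous (chord p q) := by
  unfold chord
  fun_prop

theorem mem_Icc_iff_exists_lineMap {x y z : ℝ} (h : x ≤ y) :
    z ∈ Icc x y ↔ ∃ t ∈ Icc (0 : ℝ) 1, lineMap x y t = z := by
  rw [← segment_eq_Icc h, segment_eq_image_lineMap, mem_image]

theorem segment_eq_image_chord {p q : ℝ × ℝ} (h : p.1 < q.1) :
    segment ℝ p q = (fun x => (x, chord p q x)) '' Icc p.1 q.1 := by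
  have hgraph : (fun x => (x, chord p q x)) ∘ lineMap p.1 q.1 = lineMap (k := ℝ) p q := by
    ext t
    · simp
    · simp [chord_lineMap, chord_apply_left, chord_apply_right h.ne]
  rw [← segment_eq_Icc h.le, segment_eq_image_lineMap, segment_eq_image_lineMap, ← image_comp,
    hgraph]

theorem mem_segment_iff_chord {p q r : ℝ × ℝ} (h : p.1 < q.1) :
    r ∈ segment ℝ p q ↔ r.1 ∈ Icc p.1 q.1 ∧ r.2 = chord p q r.1 := by
  rw [segment_eq_image_chord h]
  constructor
  · rintro ⟨x, hx, rfl⟩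
    exact ⟨hx, rfl⟩
  · rintro ⟨hr, hr'⟩
    exact ⟨r.1, hr, Prod.ext rfl hr'.symm⟩

theorem chord_lt_chord {p q r s : ℝ × ℝ} (hpq : p.1 < q.1) (hp : p.2 < chord r s p.1)
    (hq : q.2 < chord r s q.1) {x : ℝ} (hx : x ∈ Icc p.1 q.1) : chord p q x < chord r s x := by
  obtain ⟨t, ⟨ht₀, ht₁⟩, rfl⟩ := (mem_Icc_iff_exists_lineMap hpq.le).1 hx
  rw [chord_lineMap, chord_lineMap, chord_apply_left, chord_apply_right hpq.ne]
  exact lineMap_strict_mono_endpoints hp hq ht₀ ht₁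

theorem disjoint_segment_of_fst_lt {p q r s : ℝ × ℝ} (hpq : p.1 < q.1) (hrs : r.1 < s.1)
    (hqr : q.1 < r.1) : Disjoint (segment ℝ p q) (segment ℝ r s) := by
  rw [disjoint_left]
  intro x hxpq hxrs
  have hxq := ((mem_segment_iff_chord hpq).1 hxpq).1.2
  have hrx := ((mem_segment_iff_chord hrs).1 hxrs).1.1
  linarith

theorem disjoint_segment_of_lt_chord {p q r s : ℝ × ℝ} (hpq : p.1 < q.1) (hrs : r.1 < s.1)
    (hr : r.2 < chord p q r.1) (hs : s.2 < chord p q s.1) :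
    Disjoint (segment ℝ p q) (segment ℝ r s) := by
  rw [disjoint_left]
  intro x hxpq hxrs
  obtain ⟨-, hxpq⟩ := (mem_segment_iff_chord hpq).1 hxpq
  obtain ⟨hx, hxrs⟩ := (mem_segment_iff_chord hrs).1 hxrs
  exact (chord_lt_chord hrs hr hs hx).ne (hxrs.symm.trans hxpq)

theorem segment_inter_nonempty_of_lt_chord {p q r s : ℝ × ℝ}
    (hpr : p.1 ≤ r.1) (hrq : r.1 ≤ q.1) (hqs : q.1 ≤ s.1) (hpq : p.1 < q.1) (hrs : r.1 < s.1)
    (hr : r.2 < chord p q r.1) (hq : q.2 < chord r s q.1) :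
    (segment ℝ p q ∩ segment ℝ r s).Nonempty := by
  have hcross :
      (0 : ℝ) ∈ Icc (chord p q q.1 - chord r s q.1) (chord p q r.1 - chord r s r.1) := by
    rw [chord_apply_right hpq.ne, chord_apply_left]
    constructor <;> linarith
  obtain ⟨x, hx, hx0⟩ := intermediate_value_Icc' hrq
    ((continuous_chord p q).sub (continuous_chord r s)).continuousOn hcross
  refine ⟨(x, chord p q x), (mem_segment_iff_chord hpq).2 ⟨⟨hpr.trans hx.1, hx.2⟩, rfl⟩,
    (mem_segment_iff_chord hrs).2 ⟨⟨hx.1, hx.2.trans hqs⟩, sub_eq_zero.1 hx0⟩⟩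

def graphPt (f : ℕ → ℝ) (n : ℕ) : ℝ × ℝ := (n, f n)

section StrictConvexSeq

variable {f : ℕ → ℝ}

theorem sub_lt_mul_sub (hf : StrictMono fun n => f (n + 1) - f n) {u v : ℕ} (huv : u < v) :
    f v - f u < (v - u) * (f (v + 1) - f v) := by
  have hsum :
      ∑ k ∈ Finset.Ico u v, (f (k + 1) - f k) < ∑ _k ∈ Finset.Ico u v, (f (v + 1) - f v) :=
    Finset.sum_lt_sum_of_nonempty (Finset.nonempty_Ico.2 huv)
      fun k hk => hf (Finset.mem_Ico.1 hk).2
  rwa [Finset.sum_Ico_sub f huv.le, Finset.sum_const, Nat.card_Ico, nsmul_eq_mul,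
    Nat.cast_sub huv.le] at hsum

theorem mul_sub_le_sub (hf : StrictMono fun n => f (n + 1) - f n) {v w : ℕ} (hvw : v ≤ w) :
    (w - v) * (f (v + 1) - f v) ≤ f w - f v := by
  have hsum := Finset.card_nsmul_le_sum (Finset.Ico v w) (fun k => f (k + 1) - f k)
    (f (v + 1) - f v) fun k hk => hf.monotone (Finset.mem_Ico.1 hk).1
  rwa [Finset.sum_Ico_sub f hvw, Nat.card_Ico, nsmul_eq_mul, Nat.cast_sub hvw] at hsum

theorem lt_chord_graphPt (hf : StrictMono fun n => f (n + 1) - f n) {u v w : ℕ}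
    (huv : u < v) (hvw : v < w) : f v < chord (graphPt f u) (graphPt f w) v := by
  have hbelow := sub_lt_mul_sub hf huv
  have habove := mul_sub_le_sub hf hvw.le
  have huv' : (u : ℝ) < v := Nat.cast_lt.2 huv
  have hvw' : (v : ℝ) < w := Nat.cast_lt.2 hvw
  have key : (f v - f u) * (w - u) < (f w - f u) * (v - u) := by
    nlinarith [mul_lt_mul_of_pos_right hbelow (sub_pos.2 hvw'),
      mul_le_mul_of_nonneg_left habove (sub_pos.2 huv').le]
  simp only [chord, graphPt]
  rw [div_mul_eq_mul_div, ← sub_lt_iff_lt_add', lt_div_iff₀ (by linarith)]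
  linarith

theorem segment_graphPt_inter_nonempty_iff_of_lt (hf : StrictMono fun n => f (n + 1) - f n)
    {a b c d : ℕ} (hab : a < b) (hcd : c < d) (hac : a < c) (hbc : b ≠ c) (hbd : b ≠ d) :
    (segment ℝ (graphPt f a) (graphPt f b) ∩
        segment ℝ (graphPt f c) (graphPt f d)).Nonempty ↔
      c < b ∧ b < d := by
  have hab' : (a : ℝ) < b := Nat.cast_lt.2 hab
  have hcd' : (c : ℝ) < d := Nat.cast_lt.2 hcd
  rcases hbc.lt_or_gt with hbc | hcb
  · refine iff_of_false ?_ (by omega)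
    rw [← not_disjoint_iff_nonempty_inter, not_not]
    exact disjoint_segment_of_fst_lt hab' hcd' (Nat.cast_lt.2 hbc)
  rcases hbd.lt_or_gt with hbd | hdb
  · exact iff_of_true (segment_inter_nonempty_of_lt_chord (Nat.cast_le.2 hac.le)
      (Nat.cast_le.2 hcb.le) (Nat.cast_le.2 hbd.le) hab' hcd' (lt_chord_graphPt hf hac hcb)
      (lt_chord_graphPt hf hcb hbd)) ⟨hcb, hbd⟩
  · refine iff_of_false ?_ (by omega)
    rw [← not_disjoint_iff_nonempty_inter, not_not]
    exact disjoint_segment_of_lt_chord hab' hcd' (lt_chord_graphPt hf hac hcb)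
      (lt_chord_graphPt hf (hac.trans hcd) hdb)

theorem segment_graphPt_inter_nonempty_iff (hf : StrictMono fun n => f (n + 1) - f n)
    {a b c d : ℕ} (hab : a < b) (hcd : c < d) (hac : a ≠ c) (had : a ≠ d) (hbc : b ≠ c)
    (hbd : b ≠ d) :
    (segment ℝ (graphPt f a) (graphPt f b) ∩
        segment ℝ (graphPt f c) (graphPt f d)).Nonempty ↔
      (a < c ∧ c < b ∧ b < d) ∨ (c < a ∧ a < d ∧ d < b) := by
  rcases hac.lt_or_gt with hac | hca
  · rw [segment_graphPt_inter_nonempty_iff_of_lt hf hab hcd hac hbc hbd]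
    omega
  · rw [inter_comm, segment_graphPt_inter_nonempty_iff_of_lt hf hcd hab hca had.symm hbd.symm]
    omega

end StrictConvexSeq

theorem strictMono_factorial_succ_sub : StrictMono fun n : ℕ => ((n + 1)! : ℝ) - n ! := by
  refine strictMono_nat_of_lt_succ fun n => ?_
  have hsub (m : ℕ) : ((m + 1)! : ℝ) - m ! = (m * m ! : ℕ) := by
    push_cast [Nat.factorial_succ]
    ring
  rw [hsub, hsub, Nat.cast_lt]
  calc n * n ! < (n + 1) * n ! := Nat.mul_lt_mul_of_pos_right (Nat.lt_succ_self n) n.factorial_pos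
    _ = (n + 1)! := (Nat.factorial_succ n).symm
    _ ≤ (n + 1) * (n + 1)! := Nat.le_mul_of_pos_left _ n.succ_pos

theorem stmt_4_general (a b c d : ℕ)
    (hab : a < b) (hcd : c < d)
    (hac : a ≠ c) (had : a ≠ d) (hbc : b ≠ c) (hbd : b ≠ d) :
    (segment ℝ (factPt a) (factPt b) ∩ segment ℝ (factPt c) (factPt d)).Nonempty ↔
    ((a < c ∧ c < b ∧ b < d) ∨ (c < a ∧ a < d ∧ d < b)) :=
  segment_graphPt_inter_nonempty_iff (f := fun n => (n ! : ℝ)) strictMono_factorial_succ_sub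
    hab hcd hac had hbc hbd

theorem stmt_4 (a b c d : ℕ) (ha : 0 < a) (hb : 0 < b) (hc : 0 < c) (hd : 0 < d)
    (hab : a < b) (hcd : c < d)
    (hac : a ≠ c) (had : a ≠ d) (hbc : b ≠ c) (hbd : b ≠ d) :
    (segment ℝ (factPt a) (factPt b) ∩ segment ℝ (factPt c) (factPt d)).Nonempty ↔
    ((a < c ∧ c < b ∧ b < d) ∨ (c < a ∧ a < d ∧ d < b)) :=
  stmt_4_general a b c d hab hcd hac had hbc hbd
end

section
/- Let n be a positive integer and let ℓ, r : Fin n → ℕ be such that for every i, 1 ≤ ℓ i < r i, and the 2n values ℓ 0, …, ℓ (n−1), r 0, …, r (n−1) are pairwise distinct. For each i let R i be the ray in ℝ² starting at (ℓ i, (ℓ i)!) with direction (r i, (r i)!) − (ℓ i, (ℓ i)!). Then for all i ≠ j: R i ∩ R j ≠ ∅ if and only if the pairs (ℓ i, r i) and (ℓ j, r j) interleave, i.e. ℓ i < ℓ j < r i < r j or ℓ j < ℓ i < r j < r i. -/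
/-!
For `1 ≤ a < b` the slope of the chord of `x ↦ x!` from `a` to `b` lies in `[(b - 1)!, b!)`,
so chord slopes are strictly ordered by their right endpoints. Take `a₁ < a₂`. The ray through
`a₁, b₁` passes above the point at `a₂` exactly when `a₂ < b₁`, and the ray starting at `a₂`
is then steeper exactly when `b₁ < b₂`. Since both rays are graphs of affine functions on
`[a₂, ∞)`, they meet iff the second starts below the first and is steeper, or starts above it
and is flatter; the latter would force `b₂ < b₁ < a₂`.
-/

open Nat

lemma exists_nonneg_eq_mul_iff {D k : ℝ} (hD : D ≠ 0) :
    (∃ t, 0 ≤ t ∧ D = k * t) ↔ 0 < D * k := by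
  constructor
  · rintro ⟨t, ht, rfl⟩
    obtain ⟨hk, ht'⟩ := mul_ne_zero_iff.1 hD
    linarith [mul_pos (mul_self_pos.2 hk) (ht.lt_of_ne' ht')]
  · intro h
    have hk : k ≠ 0 := by rintro rfl; simp at h
    exact ⟨D / k, (div_pos_iff.2 (mul_pos_iff.1 h)).le, by field_simp⟩

lemma mem_ray_iff {p v z : ℝ × ℝ} (hv : 0 < v.1) :
    z ∈ ray p v ↔ p.1 ≤ z.1 ∧ z.2 = p.2 + v.2 / v.1 * (z.1 - p.1) := by
  simp only [ray, Set.mem_ofPred_eq, Prod.ext_iff, Prod.fst_add, Prod.snd_add,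
    Prod.smul_fst, Prod.smul_snd, smul_eq_mul]
  constructor
  · rintro ⟨t, ht, h1, h2⟩
    refine ⟨by nlinarith, ?_⟩
    rw [h1, h2]
    field_simp
    ring
  · rintro ⟨h1, h2⟩
    refine ⟨(z.1 - p.1) / v.1, div_nonneg (by linarith) hv.le, by field_simp; ring, ?_⟩
    rw [h2]
    ring

/-- The second ray meets the first iff it starts on the side of the first line towards which
it turns. -/
lemma ray_inter_ray_nonempty_iff {p v q w : ℝ × ℝ} (hv : 0 < v.1) (hw : 0 < w.1)
    (hpq : p.1 ≤ q.1) (hq : p.2 + v.2 / v.1 * (q.1 - p.1) - q.2 ≠ 0) :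
    (ray p v ∩ ray q w).Nonempty ↔
      0 < (p.2 + v.2 / v.1 * (q.1 - p.1) - q.2) * (w.2 / w.1 - v.2 / v.1) := by
  rw [← exists_nonneg_eq_mul_iff hq]
  constructor
  · rintro ⟨z, hzp, hzq⟩
    obtain ⟨-, hz⟩ := (mem_ray_iff hv).1 hzp
    obtain ⟨hqz, hz'⟩ := (mem_ray_iff hw).1 hzq
    exact ⟨z.1 - q.1, by linarith, by rw [hz] at hz'; linarith⟩
  · rintro ⟨t, ht, hD⟩
    refine ⟨(q.1 + t, q.2 + w.2 / w.1 * t), (mem_ray_iff hv).2 ⟨by dsimp; linarith, ?_⟩,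
      (mem_ray_iff hw).2 ⟨by dsimp; linarith, by dsimp; ring⟩⟩
    dsimp
    linarith

noncomputable def factSlope (a b : ℕ) : ℝ := ((b ! : ℝ) - a !) / ((b : ℝ) - a)

lemma factorial_le_factSlope_succ {a m : ℕ} (ha : 1 ≤ a) (ham : a ≤ m) :
    (m ! : ℝ) ≤ factSlope a (m + 1) := by
  obtain ⟨k, rfl⟩ : ∃ k, a = k + 1 := ⟨a - 1, by omega⟩
  have hkm : (k ! : ℝ) ≤ m ! := by exact_mod_cast factorial_le (by omega)
  have hma : (0 : ℝ) < (m + 1 : ℕ) - (k + 1 : ℕ) := by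
    rw [sub_pos]; exact_mod_cast (by omega : k + 1 < m + 1)
  rw [factSlope, le_div_iff₀ hma]
  push_cast [factorial_succ]
  nlinarith

lemma factSlope_lt_factorial {a b : ℕ} (hab : a < b) : factSlope a b < b ! := by
  have hba : (1 : ℝ) ≤ (b : ℝ) - a := by
    rw [le_sub_iff_add_le']; exact_mod_cast hab
  have ha : (0 : ℝ) < a ! := by exact_mod_cast factorial_pos a
  have hb : (0 : ℝ) < b ! := by exact_mod_cast factorial_pos b
  rw [factSlope, div_lt_iff₀ (by linarith)]
  nlinarith

/-- `b! ≤ (d - 1)!` separates the two slopes. -/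
lemma factSlope_lt_factSlope {a b c d : ℕ} (hab : a < b) (hc : 1 ≤ c) (hcd : c < d)
    (hbd : b < d) : factSlope a b < factSlope c d := by
  obtain ⟨m, rfl⟩ : ∃ m, d = m + 1 := ⟨d - 1, by omega⟩
  calc factSlope a b < b ! := factSlope_lt_factorial hab
    _ ≤ m ! := by exact_mod_cast factorial_le (by omega)
    _ ≤ factSlope c (m + 1) := factorial_le_factSlope_succ hc (by omega)

lemma factSlope_lt_factSlope_iff {a b c d : ℕ} (ha : 1 ≤ a) (hab : a < b) (hc : 1 ≤ c)
    (hcd : c < d) (hbd : b ≠ d) : factSlope a b < factSlope c d ↔ b < d := by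
  refine ⟨fun h => ?_, factSlope_lt_factSlope hab hc hcd⟩
  by_contra hdb
  exact (factSlope_lt_factSlope hcd ha hab (by omega)).not_gt h

lemma factSlope_ne_factSlope {a b d : ℕ} (ha : 1 ≤ a) (hab : a < b) (had : a < d)
    (hbd : b ≠ d) : factSlope a b ≠ factSlope a d := by
  rcases hbd.lt_or_gt with h | h
  · exact (factSlope_lt_factSlope hab ha had h).ne
  · exact (factSlope_lt_factSlope had ha hab h).ne'

lemma chord_sub_factorial {a m : ℕ} (ham : a < m) (b : ℕ) :
    (a ! : ℝ) + factSlope a b * ((m : ℝ) - a) - m ! =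
      (factSlope a b - factSlope a m) * ((m : ℝ) - a) := by
  have : (m : ℝ) - a ≠ 0 := sub_ne_zero.2 (by exact_mod_cast ham.ne')
  rw [sub_mul, factSlope, factSlope, div_mul_cancel₀ _ this]
  ring

lemma factPt_fst (a : ℕ) : (factPt a).1 = a := rfl

lemma factPt_snd (a : ℕ) : (factPt a).2 = a ! := rfl

lemma factPt_sub_fst_pos {a b : ℕ} (hab : a < b) : 0 < (factPt b - factPt a).1 := by
  simp only [factPt, Prod.fst_sub, sub_pos]
  exact_mod_cast hab

lemma factPt_sub_snd_div_fst (a b : ℕ) :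
    (factPt b - factPt a).2 / (factPt b - factPt a).1 = factSlope a b := rfl

lemma ray_factPt_inter_nonempty_iff {a₁ b₁ a₂ b₂ : ℕ} (ha₁ : 1 ≤ a₁) (h₁ : a₁ < b₁)
    (ha₂ : 1 ≤ a₂) (h₂ : a₂ < b₂) (h12 : a₁ < a₂) (hba : b₁ ≠ a₂) (hbb : b₁ ≠ b₂) :
    (ray (factPt a₁) (factPt b₁ - factPt a₁) ∩
      ray (factPt a₂) (factPt b₂ - factPt a₂)).Nonempty ↔ a₂ < b₁ ∧ b₁ < b₂ := by
  have hd : (0 : ℝ) < (a₂ : ℝ) - a₁ := sub_pos.2 (by exact_mod_cast h12)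
  rw [ray_inter_ray_nonempty_iff (factPt_sub_fst_pos h₁) (factPt_sub_fst_pos h₂)
    (by simp only [factPt_fst]; exact_mod_cast h12.le)]
  all_goals simp only [factPt_sub_snd_div_fst, factPt_fst, factPt_snd, chord_sub_factorial h12]
  · rw [mul_right_comm, mul_pos_iff_of_pos_right hd, mul_pos_iff, sub_pos, sub_pos, sub_neg,
      sub_neg, factSlope_lt_factSlope_iff ha₁ h12 ha₁ h₁ hba.symm,
      factSlope_lt_factSlope_iff ha₁ h₁ ha₂ h₂ hbb,
      factSlope_lt_factSlope_iff ha₁ h₁ ha₁ h12 hba,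
      factSlope_lt_factSlope_iff ha₂ h₂ ha₁ h₁ hbb.symm]
    omega
  · exact mul_ne_zero (sub_ne_zero.2 (factSlope_ne_factSlope ha₁ h₁ h12 hba)) hd.ne'

theorem stmt_5_general (n : ℕ) (ℓ r : Fin n → ℕ)
    (hlr : ∀ i, 1 ≤ ℓ i ∧ ℓ i < r i)
    (hinj : Function.Injective (Sum.elim ℓ r : Fin n ⊕ Fin n → ℕ))
    (i j : Fin n) (hij : i ≠ j) :
    (ray (factPt (ℓ i)) (factPt (r i) - factPt (ℓ i)) ∩
      ray (factPt (ℓ j)) (factPt (r j) - factPt (ℓ j))).Nonempty ↔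
    ((ℓ i < ℓ j ∧ ℓ j < r i ∧ r i < r j) ∨ (ℓ j < ℓ i ∧ ℓ i < r j ∧ r j < r i)) := by
  have hℓ : ℓ i ≠ ℓ j := hinj.ne (Sum.inl_injective.ne hij)
  have hr : r i ≠ r j := hinj.ne (Sum.inr_injective.ne hij)
  have hrℓ : r i ≠ ℓ j := hinj.ne Sum.inr_ne_inl
  have hℓr : r j ≠ ℓ i := hinj.ne Sum.inr_ne_inl
  obtain ⟨hℓi, hi⟩ := hlr i
  obtain ⟨hℓj, hj⟩ := hlr j
  rcases hℓ.lt_or_gt with h | h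
  · rw [ray_factPt_inter_nonempty_iff hℓi hi hℓj hj h hrℓ hr]
    omega
  · rw [Set.inter_comm, ray_factPt_inter_nonempty_iff hℓj hj hℓi hi h hℓr hr.symm]
    omega

theorem stmt_5 (n : ℕ) (hn : 0 < n) (ℓ r : Fin n → ℕ)
    (hlr : ∀ i, 1 ≤ ℓ i ∧ ℓ i < r i)
    (hinj : Function.Injective (Sum.elim ℓ r : Fin n ⊕ Fin n → ℕ))
    (i j : Fin n) (hij : i ≠ j) :
    (ray (factPt (ℓ i)) (factPt (r i) - factPt (ℓ i)) ∩
      ray (factPt (ℓ j)) (factPt (r j) - factPt (ℓ j))).Nonempty ↔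
    ((ℓ i < ℓ j ∧ ℓ j < r i ∧ r i < r j) ∨ (ℓ j < ℓ i ∧ ℓ i < r j ∧ r j < r i)) :=
  stmt_5_general n ℓ r hlr hinj i j hij
end

section
/- Every circle graph is a ray intersection graph, realizable with origins on the curve y = x! and directions pointing into the open upper-right quadrant. Precisely: let n be a positive integer, let G be a simple graph on Fin n, and suppose there are ℓ, r : Fin n → ℕ with 1 ≤ ℓ i < r i for all i, all 2n values pairwise distinct, such that for all i ≠ j, G.Adj i j holds if and only if the pairs (ℓ i, r i) and (ℓ j, r j) interleave (i.e. ℓ i < ℓ j < r i < r j or ℓ j < ℓ i < r j < r i). Then there exist p, v : Fin n → ℝ² such that: (1) for every i there is a positive integer x_i with p i = (x_i, x_i!); (2) for every i, both coordinates of v i are strictly positive; and (3) for all i ≠ j, G.Adj i j holds if and only if the rays {p i + t • v i : t ≥ 0} and {p j + t • v j : t ≥ 0} intersect. -/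
def wedge (u v : ℝ × ℝ) : ℝ := u.1 * v.2 - u.2 * v.1

lemma wedge_anticomm (u v : ℝ × ℝ) : wedge u v = -wedge v u := by
  unfold wedge; ring

-- The two quotients are the parameters of the intersection point on either ray.
lemma ray_inter_nonempty_iff {p q u w : ℝ × ℝ} (h : wedge u w ≠ 0) :
    (ray p u ∩ ray q w).Nonempty ↔
      0 ≤ wedge (q - p) w / wedge u w ∧ 0 ≤ wedge (q - p) u / wedge u w := by
  unfold wedge at *
  constructor
  · rintro ⟨z, ⟨t, ht, rfl⟩, ⟨s, hs, hz⟩⟩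
    simp only [Prod.ext_iff, Prod.fst_add, Prod.snd_add, Prod.smul_fst, Prod.smul_snd,
      smul_eq_mul] at hz
    have ht_eq : t = ((q - p).1 * w.2 - (q - p).2 * w.1) / (u.1 * w.2 - u.2 * w.1) := by
      rw [eq_div_iff h]; simp only [Prod.fst_sub, Prod.snd_sub]
      linear_combination w.2 * hz.1 - w.1 * hz.2
    have hs_eq : s = ((q - p).1 * u.2 - (q - p).2 * u.1) / (u.1 * w.2 - u.2 * w.1) := by
      rw [eq_div_iff h]; simp only [Prod.fst_sub, Prod.snd_sub]
      linear_combination u.2 * hz.1 - u.1 * hz.2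
    exact ⟨ht_eq ▸ ht, hs_eq ▸ hs⟩
  · rintro ⟨ht, hs⟩
    refine ⟨_, ⟨_, ht, rfl⟩, ⟨_, hs, ?_⟩⟩
    simp only [Prod.ext_iff, Prod.fst_add, Prod.snd_add, Prod.smul_fst, Prod.smul_snd,
      smul_eq_mul, Prod.fst_sub, Prod.snd_sub]
    constructor <;>
    · rw [div_mul_eq_mul_div, div_mul_eq_mul_div, add_div' _ _ _ h, add_div' _ _ _ h,
        div_left_inj' h]
      ring

lemma factPt_sub_pos {a b : ℕ} (ha : 0 < a) (hab : a < b) :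
    0 < (factPt b - factPt a).1 ∧ 0 < (factPt b - factPt a).2 := by
  simp only [factPt, Prod.fst_sub, Prod.snd_sub, sub_pos, Nat.cast_lt]
  exact ⟨hab, (Nat.factorial_lt ha).2 hab⟩

lemma wedge_factPt_sub_pos {a b c d : ℕ} (hc : 1 ≤ c) (hab : a < b) (hcd : c < d)
    (hbd : b < d) : 0 < wedge (factPt b - factPt a) (factPt d - factPt c) := by
  -- With `d = e + 1`, the first chord has slope `< b! ≤ e!` and the second has slope `≥ e!`.
  obtain ⟨e, rfl⟩ : ∃ e, d = e + 1 := ⟨d - 1, by omega⟩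
  have hbe : (b.factorial : ℝ) ≤ e.factorial := by exact_mod_cast Nat.factorial_le (by omega)
  have hce : (c.factorial : ℝ) ≤ e.factorial := by exact_mod_cast Nat.factorial_le (by omega)
  have ha : (0 : ℝ) < a.factorial := by exact_mod_cast Nat.factorial_pos a
  have hba : (1 : ℝ) ≤ b - a := by
    rw [le_sub_iff_add_le']; exact_mod_cast hab
  have hdc : (0 : ℝ) < (e + 1 : ℕ) - c := by
    rw [sub_pos]; exact_mod_cast hcd
  have hdc' : ((e + 1 : ℕ) : ℝ) - c ≤ e := by
    push_cast; linarith [(Nat.one_le_cast (α := ℝ)).mpr hc]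
  have he : (0 : ℝ) ≤ e := e.cast_nonneg
  simp only [wedge, factPt, Prod.fst_sub, Prod.snd_sub, sub_pos]
  calc ((b.factorial : ℝ) - a.factorial) * ((e + 1 : ℕ) - c)
      < b.factorial * ((e + 1 : ℕ) - c) := by gcongr; linarith
    _ ≤ e.factorial * e := by gcongr
    _ ≤ e.factorial * e * (b - a) := le_mul_of_one_le_right (by positivity) hba
    _ ≤ ((b : ℝ) - a) * ((e + 1).factorial - c.factorial) := by
      rw [Nat.factorial_succ]; push_cast; nlinarith

lemma wedge_factPt_sub_neg {a b c d : ℕ} (ha : 1 ≤ a) (hab : a < b) (hcd : c < d)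
    (hdb : d < b) : wedge (factPt b - factPt a) (factPt d - factPt c) < 0 := by
  rw [wedge_anticomm, neg_neg_iff_pos]
  exact wedge_factPt_sub_pos ha hcd hab hdb

lemma chordRays_inter_nonempty_iff_of_lt {a b c d : ℕ} (ha : 1 ≤ a) (hab : a < b)
    (hac : a < c) (hbd : b < d) (hbc : b ≠ c) (hcd : c ≠ d) :
    (ray (factPt a) (factPt c - factPt a) ∩ ray (factPt b) (factPt d - factPt b)).Nonempty ↔
      b < c ∧ c < d := by
  have hstart := wedge_factPt_sub_pos (by omega) hab hbd hbd
  rcases lt_or_gt_of_ne hcd with hcd | hdc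
  · have hdir := wedge_factPt_sub_pos (by omega) hac hbd hcd
    rw [ray_inter_nonempty_iff hdir.ne']
    rcases lt_or_gt_of_ne hbc with hbc | hcb
    · exact iff_of_true
        ⟨(div_pos hstart hdir).le, (div_pos (wedge_factPt_sub_pos ha hab hac hbc) hdir).le⟩ ⟨hbc, hcd⟩
    · exact iff_of_false
        (fun h => (div_neg_of_neg_of_pos (wedge_factPt_sub_neg ha hab hac hcb) hdir).not_ge h.2)
        (by omega)
  · have hdir := wedge_factPt_sub_neg ha hac hbd hdc
    rw [ray_inter_nonempty_iff hdir.ne]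
    exact iff_of_false (fun h => (div_neg_of_pos_of_neg hstart hdir).not_ge h.1) (by omega)

lemma chordRays_inter_nonempty_iff {a b c d : ℕ} (ha : 1 ≤ a) (hb : 1 ≤ b) (hac : a < c)
    (hbd : b < d) (hab : a ≠ b) (had : a ≠ d) (hbc : b ≠ c) (hcd : c ≠ d) :
    (ray (factPt a) (factPt c - factPt a) ∩ ray (factPt b) (factPt d - factPt b)).Nonempty ↔
      (a < b ∧ b < c ∧ c < d) ∨ (b < a ∧ a < d ∧ d < c) := by
  rcases lt_or_gt_of_ne hab with hab | hba
  · rw [chordRays_inter_nonempty_iff_of_lt ha hab hac hbd hbc hcd]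
    omega
  · rw [Set.inter_comm, chordRays_inter_nonempty_iff_of_lt hb hba hbd hac had hcd.symm]
    omega

theorem stmt_6_general (n : ℕ) (G : SimpleGraph (Fin n))
    (ℓ r : Fin n → ℕ)
    (hlr : ∀ i, 1 ≤ ℓ i ∧ ℓ i < r i)
    (hinj : Function.Injective (Sum.elim ℓ r : Fin n ⊕ Fin n → ℕ))
    (hadj : ∀ i j, i ≠ j → (G.Adj i j ↔
      ((ℓ i < ℓ j ∧ ℓ j < r i ∧ r i < r j) ∨ (ℓ j < ℓ i ∧ ℓ i < r j ∧ r j < r i)))) :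
    ∃ p v : Fin n → ℝ × ℝ,
      (∀ i, ∃ x : ℕ, 0 < x ∧ p i = factPt x) ∧
      (∀ i, 0 < (v i).1 ∧ 0 < (v i).2) ∧
      (∀ i j, i ≠ j → (G.Adj i j ↔ (ray (p i) (v i) ∩ ray (p j) (v j)).Nonempty)) := by
  refine ⟨fun i => factPt (ℓ i), fun i => factPt (r i) - factPt (ℓ i),
    fun i => ⟨ℓ i, (hlr i).1, rfl⟩, fun i => factPt_sub_pos (hlr i).1 (hlr i).2, ?_⟩
  intro i j hij
  have hℓℓ : ℓ i ≠ ℓ j := hinj.ne (a₁ := .inl i) (a₂ := .inl j) (by simpa using hij)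
  have hrr : r i ≠ r j := hinj.ne (a₁ := .inr i) (a₂ := .inr j) (by simpa using hij)
  have hℓr : ℓ i ≠ r j := hinj.ne (a₁ := .inl i) (a₂ := .inr j) Sum.inl_ne_inr
  have hrℓ : ℓ j ≠ r i := hinj.ne (a₁ := .inl j) (a₂ := .inr i) Sum.inl_ne_inr
  rw [hadj i j hij, chordRays_inter_nonempty_iff (hlr i).1 (hlr j).1 (hlr i).2 (hlr j).2
    hℓℓ hℓr hrℓ hrr]

theorem stmt_6 (n : ℕ) (hn : 0 < n) (G : SimpleGraph (Fin n))
    (ℓ r : Fin n → ℕ)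
    (hlr : ∀ i, 1 ≤ ℓ i ∧ ℓ i < r i)
    (hinj : Function.Injective (Sum.elim ℓ r : Fin n ⊕ Fin n → ℕ))
    (hadj : ∀ i j, i ≠ j → (G.Adj i j ↔
      ((ℓ i < ℓ j ∧ ℓ j < r i ∧ r i < r j) ∨ (ℓ j < ℓ i ∧ ℓ i < r j ∧ r j < r i)))) :
    ∃ p v : Fin n → ℝ × ℝ,
      (∀ i, ∃ x : ℕ, 0 < x ∧ p i = factPt x) ∧
      (∀ i, 0 < (v i).1 ∧ 0 < (v i).2) ∧
      (∀ i j, i ≠ j → (G.Adj i j ↔ (ray (p i) (v i) ∩ ray (p j) (v j)).Nonempty)) :=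
  stmt_6_general n G ℓ r hlr hinj hadj
end

section
/- Let a, b, c, d be pairwise distinct positive integers with a < c < b < d. Let A be the ray starting at (a, a!) with direction (b, b!) − (a, a!), and let C be the ray starting at (c, c!) with direction (d, d!) − (c, c!). Then A and C intersect; moreover there is a point z ∈ A ∩ C whose first coordinate satisfies c < z₁ < b. -/
open Nat fwdDiff

noncomputable def chordVal (p q : ℝ × ℝ) (x : ℝ) : ℝ :=
  p.2 + (x - p.1) / (q.1 - p.1) * (q.2 - p.2)

section Chord

variable {p q : ℝ × ℝ}

lemma chordVal_mk_left (x y : ℝ) : chordVal (x, y) q x = y := by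
  simp [chordVal]

lemma chordVal_mk_right {x y : ℝ} (hpx : p.1 ≠ x) : chordVal p (x, y) x = y := by
  rw [chordVal, div_self (sub_ne_zero.2 hpx.symm)]
  ring

lemma continuous_chordVal : Continuous (chordVal p q) := by
  unfold chordVal
  fun_prop

lemma mk_chordVal_mem_ray (hpq : p.1 < q.1) {x : ℝ} (hx : p.1 ≤ x) :
    (x, chordVal p q x) ∈ ray p (q - p) := by
  have hqp : q.1 - p.1 ≠ 0 := (sub_pos.2 hpq).ne'
  refine ⟨(x - p.1) / (q.1 - p.1), div_nonneg (sub_nonneg.2 hx) (sub_pos.2 hpq).le, ?_⟩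
  ext
  · simp only [Prod.fst_add, Prod.smul_fst, Prod.fst_sub, smul_eq_mul]
    field_simp
    ring
  · simp [chordVal]

end Chord

section StrictMonoFwdDiff

variable {u : ℕ → ℝ} {m n : ℕ}

lemma mul_fwdDiff_le_sub (hu : Monotone (Δ_[1] u)) (hmn : m ≤ n) :
    (n - m : ℝ) * Δ_[1] u m ≤ u n - u m := by
  induction n, hmn using Nat.le_induction with
  | base => simp
  | succ n hmn ih =>
    have hstep : Δ_[1] u m ≤ Δ_[1] u n := hu hmn
    simp only [fwdDiff] at hstep ih ⊢
    push_cast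
    linarith

lemma sub_lt_mul_fwdDiff (hu : StrictMono (Δ_[1] u)) (hmn : m < n) :
    u n - u m < (n - m : ℝ) * Δ_[1] u n := by
  induction n, hmn using Nat.le_induction with
  | base =>
    have hstep : Δ_[1] u m < Δ_[1] u (m + 1) := hu m.lt_succ_self
    simp only [fwdDiff] at hstep ⊢
    push_cast
    linarith
  | succ n hmn ih =>
    have hstep : Δ_[1] u n ≤ Δ_[1] u (n + 1) := hu.monotone n.le_succ
    have hnm : (0 : ℝ) ≤ n - m := sub_nonneg.2 (by exact_mod_cast (by omega : m ≤ n))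
    have := mul_le_mul_of_nonneg_left hstep hnm
    simp only [fwdDiff] at hstep ih this ⊢
    push_cast
    linarith

lemma lt_chordVal_of_strictMono_fwdDiff (hu : StrictMono (Δ_[1] u)) {a b c : ℕ}
    (hac : a < c) (hcb : c < b) : u c < chordVal (a, u a) (b, u b) c := by
  have hac' : (a : ℝ) < c := by exact_mod_cast hac
  have hcb' : (c : ℝ) < b := by exact_mod_cast hcb
  have hleft := mul_lt_mul_of_pos_left (sub_lt_mul_fwdDiff hu hac) (sub_pos.2 hcb')
  have hright := mul_le_mul_of_nonneg_left (mul_fwdDiff_le_sub hu.monotone hcb.le)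
    (sub_pos.2 hac').le
  have hba : (0 : ℝ) < b - a := by linarith
  rw [chordVal, ← sub_lt_iff_lt_add', div_mul_eq_mul_div, lt_div_iff₀ hba]
  linarith

end StrictMonoFwdDiff

lemma strictMono_fwdDiff_factorial : StrictMono (Δ_[1] fun n : ℕ => (n ! : ℝ)) := by
  have hΔ (n : ℕ) : Δ_[1] (fun n : ℕ => (n ! : ℝ)) n = n * n ! := by
    simp only [fwdDiff, Nat.factorial_succ]
    push_cast
    ring
  refine strictMono_nat_of_lt_succ fun n => ?_
  have hfac : (n ! : ℝ) ≤ (n + 1)! := by exact_mod_cast Nat.factorial_le n.le_succ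
  rw [hΔ, hΔ]
  push_cast
  calc (n : ℝ) * n ! ≤ n * (n + 1)! := mul_le_mul_of_nonneg_left hfac n.cast_nonneg
    _ < (n + 1) * (n + 1)! := mul_lt_mul_of_pos_right (lt_add_one _) (by positivity)

theorem stmt_7_general (a b c d : ℕ)
    (hac : a < c) (hcb : c < b) (hbd : b < d) :
    ∃ z : ℝ × ℝ,
      z ∈ ray (factPt a) (factPt b - factPt a) ∩ ray (factPt c) (factPt d - factPt c) ∧
      (c : ℝ) < z.1 ∧ z.1 < (b : ℝ) := by
  have hac' : (a : ℝ) < c := by exact_mod_cast hac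
  have hcb' : (c : ℝ) < b := by exact_mod_cast hcb
  have hbd' : (b : ℝ) < d := by exact_mod_cast hbd
  set gap : ℝ → ℝ := fun x => chordVal (factPt a) (factPt b) x - chordVal (factPt c) (factPt d) x
  have hgap_c : 0 < gap c := by
    have := lt_chordVal_of_strictMono_fwdDiff strictMono_fwdDiff_factorial hac hcb
    simp only [gap, factPt, chordVal_mk_left] at this ⊢
    linarith
  have hgap_b : gap b < 0 := by
    have := lt_chordVal_of_strictMono_fwdDiff strictMono_fwdDiff_factorial hcb hbd
    simp only [gap, factPt] at this ⊢
    rw [chordVal_mk_right (hac'.trans hcb').ne]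
    linarith
  obtain ⟨x, ⟨hcx, hxb⟩, hx⟩ := intermediate_value_Ioo' hcb'.le
    (continuous_chordVal.sub continuous_chordVal).continuousOn ⟨hgap_b, hgap_c⟩
  refine ⟨(x, chordVal (factPt a) (factPt b) x),
    ⟨mk_chordVal_mem_ray (p := factPt a) (hac'.trans hcb') (hac'.trans hcx).le, ?_⟩, hcx, hxb⟩
  rw [show chordVal (factPt a) (factPt b) x = chordVal (factPt c) (factPt d) x from
    sub_eq_zero.1 hx]
  exact mk_chordVal_mem_ray (p := factPt c) (hcb'.trans hbd') hcx.le

theorem stmt_7 (a b c d : ℕ) (ha : 0 < a)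
    (hac : a < c) (hcb : c < b) (hbd : b < d) :
    ∃ z : ℝ × ℝ,
      z ∈ ray (factPt a) (factPt b - factPt a) ∩ ray (factPt c) (factPt d - factPt c) ∧
      (c : ℝ) < z.1 ∧ z.1 < (b : ℝ) :=
  stmt_7_general a b c d hac hcb hbd
end

section
/- Let V be a finite type with at least 3 elements, let G be a simple graph on V, and let x ∈ V. Define the simple graph G' on V ⊕ Fin 3 by: inl u and inl w are adjacent iff G.Adj u w; inl u and inr 0 are adjacent iff G.Adj u x (so inr 0 is a non-adjacent twin of x); inl u and inr 1 are adjacent iff u = x (a pendant attached to x); inr 0 and inr 2 are adjacent (a pendant attached to the twin); and no other pairs are adjacent (adjacency is symmetric and irreflexive). Then G' has a Hamiltonian path if and only if G has a Hamiltonian cycle. -/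
/-!
The pendant vertices `inr 1` and `inr 2` have a single neighbour each, so they are the two ends
of every Hamiltonian path of `G'`. Such a path therefore reads `inr 2, inr 0, inl y, …, inl x, inr 1`
with `y` a neighbour of `x` (because `inr 0` is a twin of `x`), and its middle part is a Hamiltonian
path of `G` from `y` to `x`; the edge `xy` closes it into a Hamiltonian cycle, which is a genuine
cycle since `G` has at least three vertices. Conversely, cutting a Hamiltonian cycle of `G` at an
edge `xy` leaves a Hamiltonian path from `y` to `x`, and attaching `inr 0, inr 2` before `y` and
`inr 1` after `x` gives a Hamiltonian path of `G'`.
-/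

namespace SimpleGraph.Walk

variable {V W : Type*} {G : SimpleGraph V} {u w : V}

theorem IsPath.eq_start_or_eq_end_of_forall_adj_eq {c d : V} {p : G.Walk u w} (hp : p.IsPath)
    (hc : c ∈ p.support) (hcd : ∀ y, G.Adj c y → y = d) : c = u ∨ c = w := by
  induction p with
  | nil => simpa using hc
  | @cons u v w h p ih =>
    rw [cons_isPath_iff] at hp
    rcases List.mem_cons.mp (support_cons h p ▸ hc) with rfl | hc
    · exact .inl rfl
    rcases ih hp.1 hc with rfl | rfl
    · refine .inr (by_contra fun hcw => ?_)
      obtain ⟨z, hz, q, rfl⟩ := exists_eq_cons_of_ne hcw p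
      obtain rfl : u = z := (hcd u h.symm).trans (hcd z hz).symm
      exact hp.2 (by simp)
    · exact .inr rfl

theorem exists_support_map_eq_of_forall_mem_range {H : SimpleGraph W} (f : G ↪g H) {u' w' : W}
    (p : H.Walk u' w') (hp : ∀ v ∈ p.support, v ∈ Set.range f) (ha : f u = u') (hb : f w = w') :
    ∃ q : G.Walk u w, q.support.map f = p.support := by
  induction p generalizing u with
  | nil =>
    obtain rfl := f.injective (ha.trans hb.symm)
    exact ⟨nil, by simp [ha]⟩
  | @cons u' v' w' h p ih =>
    subst ha
    obtain ⟨v, rfl⟩ := hp _ (p.start_mem_support.tail _)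
    obtain ⟨q, hq⟩ := ih (fun v hv => hp v (hv.tail _)) rfl hb
    exact ⟨cons (f.map_adj_iff.mp h) q, by simp [hq]⟩

variable [DecidableEq V]

theorem IsHamiltonian.reverse {p : G.Walk u w} (hp : p.IsHamiltonian) :
    p.reverse.IsHamiltonian := fun a => by
  simpa [List.count_reverse] using hp a

theorem IsHamiltonian.exists_isHamiltonian_of_forall_adj_eq {p : G.Walk u w}
    (hp : p.IsHamiltonian) {a b a' b' : V} (hab : a ≠ b) (ha : ∀ y, G.Adj a y → y = a')
    (hb : ∀ y, G.Adj b y → y = b') : ∃ q : G.Walk a b, q.IsHamiltonian := by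
  rcases hp.isPath.eq_start_or_eq_end_of_forall_adj_eq (hp.mem_support a) ha with rfl | rfl <;>
    rcases hp.isPath.eq_start_or_eq_end_of_forall_adj_eq (hp.mem_support b) hb with rfl | rfl
  all_goals first | exact absurd rfl hab | exact ⟨p, hp⟩ | exact ⟨p.reverse, hp.reverse⟩

theorem IsHamiltonianCycle.exists_adj_isHamiltonian {c : G.Walk u u} (hc : c.IsHamiltonianCycle)
    (x : V) : ∃ y, G.Adj x y ∧ ∃ q : G.Walk y x, q.IsHamiltonian := by
  have hx := hc.rotate (hc.mem_support x)
  obtain ⟨y, h, q, hq⟩ := not_nil_iff.mp hx.isCycle.not_nil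
  rw [hq] at hx
  exact ⟨y, h, q, fun a => by simpa using hx.isHamiltonian_tail a⟩

theorem IsHamiltonian.isHamiltonianCycle_cons [Fintype V] (hV : 3 ≤ Fintype.card V) {x y : V}
    (h : G.Adj x y) {q : G.Walk y x} (hq : q.IsHamiltonian) : (cons h q).IsHamiltonianCycle := by
  rw [isHamiltonianCycle_iff_isCycle_and_length_eq, cons_isCycle_iff, length_cons, hq.length_eq]
  refine ⟨⟨hq.isPath, fun he => ?_⟩, by omega⟩
  -- a path from `y` to `x` through the edge `xy` is that edge alone, so `G` would have two vertices
  have := hq.isPath.length_eq_one_of_mem_edges (Sym2.eq_swap ▸ he)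
  rw [hq.length_eq] at this
  omega

end SimpleGraph.Walk

open SimpleGraph Walk Sum

namespace PendantGadget

variable {V : Type*} {G : SimpleGraph V} {x : V} {G' : SimpleGraph (V ⊕ Fin 3)}

def inlEmbedding (h1 : ∀ u w : V, G'.Adj (inl u) (inl w) ↔ G.Adj u w) : G ↪g G' :=
  ⟨Function.Embedding.inl, h1 _ _⟩

@[simp]
theorem coe_inlEmbedding (h1 : ∀ u w : V, G'.Adj (inl u) (inl w) ↔ G.Adj u w) :
    ⇑(inlEmbedding h1) = inl :=
  rfl

theorem eq_inr_zero_of_adj_inr_two (h4 : ∀ u : V, ¬ G'.Adj (inl u) (inr 2))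
    (h7 : ¬ G'.Adj (inr 1) (inr 2)) {v : V ⊕ Fin 3} (h : G'.Adj (inr 2) v) : v = inr 0 := by
  rcases v with u | i
  · exact absurd h.symm (h4 u)
  fin_cases i
  · rfl
  · exact absurd h.symm h7
  · exact (G'.irrefl h).elim

theorem eq_inl_of_adj_inr_one (h3 : ∀ u : V, G'.Adj (inl u) (inr 1) ↔ u = x)
    (h6 : ¬ G'.Adj (inr 0) (inr 1)) (h7 : ¬ G'.Adj (inr 1) (inr 2)) {v : V ⊕ Fin 3}
    (h : G'.Adj (inr 1) v) : v = inl x := by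
  rcases v with u | i
  · exact congrArg inl ((h3 u).mp h.symm)
  fin_cases i
  · exact absurd h.symm h6
  · exact (G'.irrefl h).elim
  · exact absurd h h7

variable [DecidableEq V]

theorem exists_adj_isHamiltonian_of_isHamiltonian
    (h1 : ∀ u w : V, G'.Adj (inl u) (inl w) ↔ G.Adj u w)
    (h2 : ∀ u : V, G'.Adj (inl u) (inr 0) ↔ G.Adj u x)
    (h3 : ∀ u : V, G'.Adj (inl u) (inr 1) ↔ u = x)
    (h4 : ∀ u : V, ¬ G'.Adj (inl u) (inr 2))
    (h6 : ¬ G'.Adj (inr 0) (inr 1)) (h7 : ¬ G'.Adj (inr 1) (inr 2))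
    {p : G'.Walk (inr 2) (inr 1)} (hp : p.IsHamiltonian) :
    ∃ y, G.Adj x y ∧ ∃ q : G.Walk y x, q.IsHamiltonian := by
  obtain ⟨v, h20, p, rfl⟩ := exists_eq_cons_of_ne (by simp) p
  obtain rfl := eq_inr_zero_of_adj_inr_two h4 h7 h20
  obtain ⟨v, h0v, p, rfl⟩ := exists_eq_cons_of_ne (by simp) p
  obtain ⟨y, rfl⟩ : ∃ y, v = inl y := by
    rcases v with y | i
    · exact ⟨y, rfl⟩
    fin_cases i
    · exact (G'.irrefl h0v).elim
    · exact absurd h0v h6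
    · simpa [List.count_eq_zero] using hp (inr 2)
  obtain ⟨v, h1v, r, hr⟩ := exists_eq_cons_of_ne (by simp) p.reverse
  obtain rfl := eq_inl_of_adj_inr_one h3 h6 h7 h1v
  have hsupp : (cons h20 (cons h0v p)).support =
      inr 2 :: inr 0 :: (r.support.reverse ++ [inr 1]) := by
    rw [support_cons, support_cons, ← reverse_reverse p, hr]
    simp [support_append]
  have hnodup : (inr 2 :: inr 0 :: inr 1 :: r.support).Nodup := by
    simpa [hsupp, List.nodup_append_comm] using hp.isPath.support_nodup
  have hrange : ∀ v ∈ r.support, v ∈ Set.range (inlEmbedding h1) := by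
    rintro (a | i) hi
    · exact ⟨a, rfl⟩
    · fin_cases i <;> simp_all
  obtain ⟨q, hq⟩ := exists_support_map_eq_of_forall_mem_range (inlEmbedding h1) r hrange rfl rfl
  refine ⟨y, ((h2 y).mp h0v.symm).symm, q.reverse, IsHamiltonian.reverse ?_⟩
  refine IsPath.isHamiltonian_of_mem (IsPath.mk' ?_) fun a => ?_
  · rw [← List.nodup_map_iff (inlEmbedding h1).injective, hq]
    exact hnodup.of_cons.of_cons.of_cons
  · simpa [hsupp, ← hq] using hp.mem_support (inl a)

theorem exists_isHamiltonian_of_adj_isHamiltonian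
    (h1 : ∀ u w : V, G'.Adj (inl u) (inl w) ↔ G.Adj u w)
    (h2 : ∀ u : V, G'.Adj (inl u) (inr 0) ↔ G.Adj u x)
    (h3 : ∀ u : V, G'.Adj (inl u) (inr 1) ↔ u = x)
    (h5 : G'.Adj (inr 0) (inr 2)) {y : V} (h : G.Adj x y) {q : G.Walk y x}
    (hq : q.IsHamiltonian) : ∃ p : G'.Walk (inr 2) (inr 1), p.IsHamiltonian := by
  set f := inlEmbedding h1
  have h0y : G'.Adj (inr 0) (f y) := ((h2 y).mpr h.symm).symm
  have hx1 : G'.Adj (f x) (inr 1) := (h3 x).mpr rfl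
  set p : G'.Walk (inr 2) (inr 1) := cons h5.symm (cons h0y ((q.map f.toHom).concat hx1))
  have hp : p.support = inr 2 :: inr 0 :: (q.support.map inl ++ [inr 1]) := by
    simp only [p, support_cons, support_concat, Walk.support_map]
    simp [f]
  refine ⟨p, IsPath.isHamiltonian_of_mem (IsPath.mk' ?_) fun v => ?_⟩
  · simp [hp, List.nodup_append, hq.isPath.support_nodup.map inl_injective]
  · rcases v with a | i
    · simp [hp, hq.mem_support]
    · fin_cases i <;> simp [hp]

end PendantGadget

open PendantGadget

theorem stmt_9 {V : Type*} [Fintype V] [DecidableEq V] (hV : 3 ≤ Fintype.card V)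
    (G : SimpleGraph V) (x : V) (G' : SimpleGraph (V ⊕ Fin 3))
    (h1 : ∀ u w : V, G'.Adj (Sum.inl u) (Sum.inl w) ↔ G.Adj u w)
    (h2 : ∀ u : V, G'.Adj (Sum.inl u) (Sum.inr 0) ↔ G.Adj u x)
    (h3 : ∀ u : V, G'.Adj (Sum.inl u) (Sum.inr 1) ↔ u = x)
    (h4 : ∀ u : V, ¬ G'.Adj (Sum.inl u) (Sum.inr 2))
    (h5 : G'.Adj (Sum.inr 0) (Sum.inr 2))
    (h6 : ¬ G'.Adj (Sum.inr 0) (Sum.inr 1))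
    (h7 : ¬ G'.Adj (Sum.inr 1) (Sum.inr 2)) :
    (∃ (u w : V ⊕ Fin 3) (p : G'.Walk u w), p.IsHamiltonian ∧ p.IsPath) ↔
    (∃ (u : V) (c : G.Walk u u), c.IsHamiltonianCycle) := by
  have hpath : (∃ (u w : V ⊕ Fin 3) (p : G'.Walk u w), p.IsHamiltonian ∧ p.IsPath) ↔
      ∃ p : G'.Walk (inr 2) (inr 1), p.IsHamiltonian :=
    ⟨fun ⟨_, _, p, hp, _⟩ => hp.exists_isHamiltonian_of_forall_adj_eq (by simp)
        (fun _ => eq_inr_zero_of_adj_inr_two h4 h7) (fun _ => eq_inl_of_adj_inr_one h3 h6 h7),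
      fun ⟨p, hp⟩ => ⟨_, _, p, hp, hp.isPath⟩⟩
  have hcycle : (∃ (u : V) (c : G.Walk u u), c.IsHamiltonianCycle) ↔
      ∃ y, G.Adj x y ∧ ∃ q : G.Walk y x, q.IsHamiltonian :=
    ⟨fun ⟨_, _, hc⟩ => hc.exists_adj_isHamiltonian x,
      fun ⟨_, h, _, hq⟩ => ⟨x, _, hq.isHamiltonianCycle_cons hV h⟩⟩
  rw [hpath, hcycle]
  exact ⟨fun ⟨_, hp⟩ => exists_adj_isHamiltonian_of_isHamiltonian h1 h2 h3 h4 h6 h7 hp,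
    fun ⟨_, h, _, hq⟩ => exists_isHamiltonian_of_adj_isHamiltonian h1 h2 h3 h5 h hq⟩
end

section
/- Let a, b, c be positive integers with a < b < c. Then, in ℝ, a + ((c! − a!) · (b − a))/(b! − a!) − c ≥ 3. (Geometrically: the line through (a, a!) and (b, b!), evaluated at height y = c!, lies at least 3 units to the right of the point (c, c!).) -/
lemma key_fact (a j m : ℕ) (ha : 1 ≤ a) (hj : 1 ≤ j) (hm : 1 ≤ m) :
    (j + m + 3) * Nat.factorial (a + j) + Nat.factorial a * j ≤
      Nat.factorial (a + j + m) * j + (j + m + 3) * Nat.factorial a := by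
  induction m, hm using Nat.le_induction with
  | base =>
    have hA : 1 ≤ Nat.factorial a := Nat.one_le_iff_ne_zero.mpr (Nat.factorial_ne_zero a)
    rcases Nat.lt_or_ge j 2 with hj2 | hj2
    · -- j = 1
      interval_cases j
      have h1 : Nat.factorial (a + 1) = (a + 1) * Nat.factorial a := rfl
      have h2 : Nat.factorial (a + 1 + 1) = (a + 2) * ((a + 1) * Nat.factorial a) := by
        rw [Nat.factorial_succ, h1]
      rw [h1, h2]
      have hc : 5 * (a + 1) + 1 ≤ (a + 2) * (a + 1) + 5 := by nlinarith [ha]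
      have h := Nat.mul_le_mul_right (Nat.factorial a) hc
      nlinarith [h]
    · -- j ≥ 2
      have h2 : Nat.factorial (a + j + 1) = (a + j + 1) * Nat.factorial (a + j) := rfl
      rw [h2]
      have hX : 1 ≤ Nat.factorial (a + j) := Nat.one_le_iff_ne_zero.mpr (Nat.factorial_ne_zero _)
      nlinarith [hA, hX, ha, hj2]
  | succ m hm ih =>
    have h2 : Nat.factorial (a + j + (m + 1)) = (a + j + m + 1) * Nat.factorial (a + j + m) := by
      have : a + j + (m + 1) = (a + j + m) + 1 := by ring
      rw [this, Nat.factorial_succ]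
    rw [h2]
    have hA : 1 ≤ Nat.factorial a := Nat.one_le_iff_ne_zero.mpr (Nat.factorial_ne_zero a)
    have hXA : Nat.factorial a ≤ Nat.factorial (a + j) := Nat.factorial_le (by omega)
    have hF : 1 ≤ Nat.factorial (a + j + m) := Nat.one_le_iff_ne_zero.mpr (Nat.factorial_ne_zero _)
    have h4 : 2 * (Nat.factorial (a + j + m) * j) ≤
        (a + j + m + 1) * Nat.factorial (a + j + m) * j := by
      have : 2 * Nat.factorial (a + j + m) ≤ (a + j + m + 1) * Nat.factorial (a + j + m) :=
        Nat.mul_le_mul_right _ (by omega)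
      calc 2 * (Nat.factorial (a + j + m) * j) = 2 * Nat.factorial (a + j + m) * j := by ring
        _ ≤ (a + j + m + 1) * Nat.factorial (a + j + m) * j := Nat.mul_le_mul_right _ this
    have h5 : (j + m + 2) * Nat.factorial a ≤ (j + m + 2) * Nat.factorial (a + j) :=
      Nat.mul_le_mul_left _ hXA
    nlinarith [ih, h4, h5]

theorem stmt_12 (a b c : ℕ) (ha : 0 < a) (hab : a < b) (hbc : b < c) :
    (3 : ℝ) ≤ (a : ℝ) +
      (((Nat.factorial c : ℝ) - (Nat.factorial a : ℝ)) * ((b : ℝ) - (a : ℝ))) /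
        ((Nat.factorial b : ℝ) - (Nat.factorial a : ℝ)) - (c : ℝ) := by
  have hk := key_fact a (b - a) (c - b) ha (by omega) (by omega)
  have e1 : a + (b - a) = b := by omega
  have e2 : b + (c - b) = c := by omega
  rw [e1, e2] at hk
  have hk' := (Nat.cast_le (α := ℝ)).mpr hk
  push_cast [Nat.cast_sub hab.le, Nat.cast_sub hbc.le] at hk'
  have hBA : (0 : ℝ) < (Nat.factorial b : ℝ) - (Nat.factorial a : ℝ) := by
    have : Nat.factorial a < Nat.factorial b := (Nat.factorial_lt ha).mpr hab
    have := (Nat.cast_lt (α := ℝ)).mpr this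
    linarith
  have h2 : ((c : ℝ) - a + 3) * ((Nat.factorial b : ℝ) - (Nat.factorial a : ℝ)) ≤
      ((Nat.factorial c : ℝ) - (Nat.factorial a : ℝ)) * ((b : ℝ) - (a : ℝ)) := by
    linear_combination hk'
  have h3 := (le_div_iff₀ hBA).mpr h2
  linarith
end

section
/- Let a, c, d be positive integers with a < c < d. Then, in ℝ, c − ((c! − a!) · (d − c))/(d! − c!) − a ≥ 3/4. (Geometrically: the line through (c, c!) and (d, d!), evaluated at height y = a!, lies at least 3/4 units to the right of the point (a, a!).) -/
lemma bern_aux (c : ℕ) : ∀ k : ℕ, 1 + c * k ≤ (c + 1) ^ k := by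
  intro k
  induction k with
  | zero => simp
  | succ n ih =>
      have h1 : (c + 1) ^ (n + 1) = (c + 1) ^ n * (c + 1) := pow_succ _ _
      nlinarith [Nat.one_le_pow n (c + 1) (Nat.succ_pos c)]

lemma denom_aux (c d : ℕ) (hcd : c < d) :
    c.factorial * (c * (d - c)) ≤ d.factorial - c.factorial := by
  have hle : c ≤ d := hcd.le
  have h1 : c.factorial * (c + 1) ^ (d - c) ≤ d.factorial := by
    have := Nat.factorial_mul_pow_le_factorial (m := c) (n := d - c)
    rwa [Nat.add_sub_cancel' hle] at this
  have h2 : 1 + c * (d - c) ≤ (c + 1) ^ (d - c) := bern_aux c (d - c)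
  have h3 : c.factorial * (1 + c * (d - c)) ≤ d.factorial :=
    le_trans (Nat.mul_le_mul_left _ h2) h1
  have h4 : c.factorial + c.factorial * (c * (d - c)) ≤ d.factorial := by
    rwa [Nat.mul_add, Nat.mul_one] at h3
  omega

theorem stmt_13 (a c d : ℕ) (ha : 0 < a) (hac : a < c) (hcd : c < d) :
    (3 / 4 : ℝ) ≤ (c : ℝ) -
      (((Nat.factorial c : ℝ) - (Nat.factorial a : ℝ)) * ((d : ℝ) - (c : ℝ))) /
        ((Nat.factorial d : ℝ) - (Nat.factorial c : ℝ)) - (a : ℝ) := by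
  have hc1 : 1 ≤ c := le_trans ha hac.le
  have hfac : a.factorial ≤ c.factorial := Nat.factorial_le hac.le
  have hfcd : c.factorial ≤ d.factorial := Nat.factorial_le hcd.le
  have hdenomN := denom_aux c d hcd
  have hdenom : (c.factorial : ℝ) * ((c : ℝ) * ((d : ℝ) - c)) ≤
      (d.factorial : ℝ) - c.factorial := by
    have h := (Nat.cast_le (α := ℝ)).2 hdenomN
    push_cast [Nat.cast_sub hcd.le, Nat.cast_sub hfcd] at h
    convert h using 2
  have hk : (1 : ℝ) ≤ (d : ℝ) - c := by
    have : (c : ℝ) + 1 ≤ d := by exact_mod_cast hcd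
    linarith
  have hfcpos : (1 : ℝ) ≤ (c.factorial : ℝ) := by
    exact_mod_cast Nat.one_le_iff_ne_zero.2 c.factorial_ne_zero
  have hcpos : (1 : ℝ) ≤ (c : ℝ) := by exact_mod_cast hc1
  have hck : (1 : ℝ) ≤ (c : ℝ) * ((d : ℝ) - c) := by nlinarith
  have hdpos : (0 : ℝ) < (d.factorial : ℝ) - c.factorial := by
    have := mul_le_mul hfcpos hck zero_le_one (le_trans zero_le_one hfcpos)
    nlinarith
  have hfacR : (a.factorial : ℝ) ≤ c.factorial := by exact_mod_cast hfac
  have hfapos : (1 : ℝ) ≤ (a.factorial : ℝ) := by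
    exact_mod_cast Nat.one_le_iff_ne_zero.2 a.factorial_ne_zero
  rcases eq_or_lt_of_le (Nat.succ_le_of_lt hac) with hcase | hcase
  · -- a + 1 = c
    have hceq : (a : ℝ) + 1 = c := by exact_mod_cast hcase
    have hfa : (c : ℝ) * a.factorial = c.factorial := by
      have hc : c = a + 1 := hcase.symm
      subst hc
      have h := Nat.factorial_succ a
      push_cast [h]
      ring
    have hfr : ((c.factorial : ℝ) - a.factorial) * ((d : ℝ) - c) /
        ((d.factorial : ℝ) - c.factorial) ≤ 1 / 4 := by
      rw [div_le_iff₀ hdpos, ← hfa]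
      have h7 : ((c : ℝ) * a.factorial) * ((c : ℝ) * ((d : ℝ) - c)) ≤
          (d.factorial : ℝ) - c.factorial := by rw [hfa]; exact hdenom
      have h6 : (0 : ℝ) ≤ ((c : ℝ) - 2) ^ 2 * ((a.factorial : ℝ) * ((d : ℝ) - c)) :=
        mul_nonneg (sq_nonneg _) (by nlinarith)
      nlinarith
    linarith
  · -- a + 2 ≤ c
    have hge : (a : ℝ) + 2 ≤ c := by exact_mod_cast hcase
    have hfr : ((c.factorial : ℝ) - a.factorial) * ((d : ℝ) - c) /
        ((d.factorial : ℝ) - c.factorial) ≤ 1 := by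
      rw [div_le_one hdpos]
      have h8 : (0 : ℝ) ≤ ((c : ℝ) - 1) * ((c.factorial : ℝ) * ((d : ℝ) - c)) :=
        mul_nonneg (by linarith) (by nlinarith)
      have h9 : (0 : ℝ) ≤ (a.factorial : ℝ) * ((d : ℝ) - c) :=
        mul_nonneg (by linarith) (by linarith)
      nlinarith
    linarith
end
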